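/- arXiv:2206.14692 — 3 statements merged into one kernel-verified Lean document; each statement's English description precedes it below -/
import Mathlib

section
/- Let X be a δ-hyperbolic geodesic metric space, and let U, V be λ-quasiconvex subsets of X. If the pair (U, V) is not (2λ + 7δ)-cobounded, then P_V(U) ⊆ N_{4λ+8δ}(U) ∩ V and P_U(V) ⊆ N_{4λ+8δ}(V) ∩ U. -/
open Metric Set

/-- A geodesic from `a` to `b` in a metric space, parametrized by arc length
on the interval `[0, dist a b]`. -/
def IsGeodesicFrom {X : Type*} [MetricSpace X] (γ : ℝ → X) (a b : X) : Prop :=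
  γ 0 = a ∧ γ (dist a b) = b ∧
    ∀ s ∈ Set.Icc (0 : ℝ) (dist a b), ∀ t ∈ Set.Icc (0 : ℝ) (dist a b),
      dist (γ s) (γ t) = |s - t|

/-- A geodesic metric space: any two points are joined by a geodesic. -/
def GeodesicMetricSpace (X : Type*) [MetricSpace X] : Prop :=
  ∀ a b : X, ∃ γ : ℝ → X, IsGeodesicFrom γ a b

/-- The image of a geodesic segment from `a` to `b`. -/
def geodImage {X : Type*} [MetricSpace X] (γ : ℝ → X) (a b : X) : Set X :=
  γ '' Set.Icc 0 (dist a b)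

/-- `X` is `δ`-hyperbolic: every geodesic triangle is `δ`-slim, i.e. each side is
contained in the `δ`-neighbourhood of the union of the other two sides. -/
def DeltaHyp (X : Type*) [MetricSpace X] (δ : ℝ) : Prop :=
  ∀ (a b c : X) (γ₁ γ₂ γ₃ : ℝ → X),
    IsGeodesicFrom γ₁ a b → IsGeodesicFrom γ₂ b c → IsGeodesicFrom γ₃ a c →
      ∀ x ∈ geodImage γ₃ a c,
        Metric.infDist x (geodImage γ₁ a b ∪ geodImage γ₂ b c) ≤ δ

/-- `U` is a `K`-quasiconvex subset: every geodesic joining two points of `U`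
lies in the (closed) `K`-neighbourhood of `U`. -/
def QuasiconvexSet {X : Type*} [MetricSpace X] (K : ℝ) (U : Set X) : Prop :=
  ∀ a ∈ U, ∀ b ∈ U, ∀ γ : ℝ → X, IsGeodesicFrom γ a b →
    ∀ x ∈ geodImage γ a b, Metric.infDist x U ≤ K

/-- `u` is a nearest point projection of `x` on `U`. -/
def IsNPProj {X : Type*} [MetricSpace X] (x : X) (U : Set X) (u : X) : Prop :=
  u ∈ U ∧ ∀ u' ∈ U, dist x u ≤ dist x u'

/-- The set of all nearest point projections of points of `V` onto `U`
(denoted `P_U(V)` in the paper). -/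
def projSet {X : Type*} [MetricSpace X] (U V : Set X) : Set X :=
  {u | ∃ v ∈ V, IsNPProj v U u}

namespace Stmt12Aux

variable {X : Type*} [MetricSpace X]

lemma real_le_of_forall_pos {a b : ℝ} (h : ∀ ε : ℝ, 0 < ε → a ≤ b + ε) : a ≤ b := by
  by_contra hc
  push_neg at hc
  have := h ((a - b) / 2) (by linarith)
  linarith

lemma mem_geodImage' {γ : ℝ → X} {a b : X} {s : ℝ} (h : s ∈ Set.Icc (0:ℝ) (dist a b)) :
    γ s ∈ geodImage γ a b := ⟨s, h, rfl⟩

lemma left_mem_geodImage {γ : ℝ → X} {a b : X} (h : IsGeodesicFrom γ a b) :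
    a ∈ geodImage γ a b := ⟨0, ⟨le_refl 0, dist_nonneg⟩, h.1⟩

lemma geod_dist_eq {γ : ℝ → X} {a b : X} (h : IsGeodesicFrom γ a b)
    {q : X} (hq : q ∈ geodImage γ a b) :
    dist a q + dist q b = dist a b := by
  obtain ⟨t, ht, rfl⟩ := hq
  have h0 : (0:ℝ) ∈ Set.Icc (0:ℝ) (dist a b) := ⟨le_refl _, dist_nonneg⟩
  have hD : dist a b ∈ Set.Icc (0:ℝ) (dist a b) := ⟨dist_nonneg, le_refl _⟩
  have e1 : dist a (γ t) = t := by
    have h1 := h.2.2 0 h0 t ht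
    rw [h.1] at h1
    rw [h1, abs_of_nonpos (by linarith [ht.1])]
    ring
  have e2 : dist (γ t) b = dist a b - t := by
    have h2 := h.2.2 t ht (dist a b) hD
    rw [h.2.1] at h2
    rw [h2, abs_of_nonpos (by linarith [ht.2])]
    ring
  rw [e1, e2]; ring

lemma geod_dist_le {γ : ℝ → X} {a b : X} (h : IsGeodesicFrom γ a b)
    {q : X} (hq : q ∈ geodImage γ a b) : dist a q ≤ dist a b := by
  have := geod_dist_eq h hq
  have := dist_nonneg (x := q) (y := b)
  linarith

/-- L1: a nearest point projection `u` of `x` on a `λ`-quasiconvex set `U` is within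
`λ + 2δ` of any geodesic from `x` to a point `u' ∈ U`. -/
lemma proj_near_geodesic (δ lam : ℝ) (hδ : 0 ≤ δ) (hlam : 0 ≤ lam)
    (hgeo : GeodesicMetricSpace X) (hhyp : DeltaHyp X δ)
    (U : Set X) (hU : QuasiconvexSet lam U)
    (x u u' : X) (hproj : IsNPProj x U u) (hu' : u' ∈ U)
    (γ : ℝ → X) (hγ : IsGeodesicFrom γ x u') :
    infDist u (geodImage γ x u') ≤ lam + 2*δ := by
  by_cases hsmall : dist x u ≤ lam + δ
  · have hx : x ∈ geodImage γ x u' := left_mem_geodImage hγ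
    calc infDist u (geodImage γ x u') ≤ dist u x := infDist_le_dist_of_mem hx
      _ = dist x u := dist_comm u x
      _ ≤ lam + 2*δ := by linarith
  · push_neg at hsmall
    apply real_le_of_forall_pos
    intro η hη
    obtain ⟨α, hα⟩ := hgeo x u
    obtain ⟨β, hβ⟩ := hgeo u' u
    set η₀ := min (η/2) (dist x u - (lam+δ)) with hη₀def
    have hη₀a : η₀ ≤ η/2 := min_le_left _ _
    have hη₀b : η₀ ≤ dist x u - (lam+δ) := min_le_right _ _
    have hη₀ : 0 < η₀ := lt_min (by linarith) (by linarith)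
    set s := dist x u - (lam + δ + η₀) with hsdef
    have hs : s ∈ Set.Icc (0:ℝ) (dist x u) := ⟨by linarith, by linarith⟩
    have h0 : (0:ℝ) ∈ Set.Icc (0:ℝ) (dist x u) := ⟨le_refl _, dist_nonneg⟩
    have hD : dist x u ∈ Set.Icc (0:ℝ) (dist x u) := ⟨dist_nonneg, le_refl _⟩
    have hxp : dist x (α s) = s := by
      have h1 := hα.2.2 0 h0 s hs
      rw [hα.1] at h1
      rw [h1, abs_of_nonpos (by linarith [hs.1])]
      ring
    have hpu : dist (α s) u = lam + δ + η₀ := by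
      have h1 := hα.2.2 s hs (dist x u) hD
      rw [hα.2.1] at h1
      rw [h1, abs_of_nonpos (by linarith)]
      ring
    have hslim := hhyp x u' u γ β α hγ hβ hα (α s) (mem_geodImage' hs)
    have hne : (geodImage γ x u' ∪ geodImage β u' u).Nonempty :=
      ⟨x, Or.inl (left_mem_geodImage hγ)⟩
    set ε := η₀ / 8 with hεdef
    have hε : 0 < ε := by positivity
    obtain ⟨q, hq, hpq⟩ := (infDist_lt_iff hne).1
      (lt_of_le_of_lt hslim (by linarith : δ < δ + ε))
    rcases hq with hq | hq
    · -- q on the geodesic [x, u']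
      calc infDist u (geodImage γ x u') ≤ dist u q := infDist_le_dist_of_mem hq
        _ ≤ dist u (α s) + dist (α s) q := dist_triangle _ _ _
        _ = dist (α s) u + dist (α s) q := by rw [dist_comm u (α s)]
        _ ≤ (lam + δ + η₀) + (δ + ε) := by
            rw [hpu]; linarith
        _ ≤ lam + 2*δ + η := by
            rw [hεdef]; linarith
    · -- q on the geodesic [u', u]: contradiction
      exfalso
      have hqU : infDist q U ≤ lam := hU u' hu' u hproj.1 β hβ q hq
      have hUne : U.Nonempty := ⟨u, hproj.1⟩
      obtain ⟨u'', hu'', hqu''⟩ := (infDist_lt_iff hUne).1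
        (lt_of_le_of_lt hqU (by linarith : lam < lam + ε))
      have h1 : dist x u ≤ dist x u'' := hproj.2 u'' hu''
      have h2 : dist x u'' ≤ dist x (α s) + dist (α s) q + dist q u'' :=
        dist_triangle4 _ _ _ _
      rw [hxp] at h2
      have : dist x u ≤ s + (δ + ε) + (lam + ε) := by linarith
      rw [hsdef, hεdef] at this
      linarith

/-- Step A: a far-apart pair of projections of `V` on `U` forces `u1` to be
`2λ+3δ`-close to `V`. -/
lemma far_pair_near (δ lam : ℝ) (hδ : 0 ≤ δ) (hlam : 0 ≤ lam)
    (hgeo : GeodesicMetricSpace X) (hhyp : DeltaHyp X δ)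
    (U V : Set X) (hU : QuasiconvexSet lam U) (hV : QuasiconvexSet lam V)
    (u1 u2 v1 v2 : X) (hv1 : v1 ∈ V) (hp1 : IsNPProj v1 U u1)
    (hv2 : v2 ∈ V) (hp2 : IsNPProj v2 U u2)
    (hfar : 2*lam + 7*δ < dist u1 u2) :
    infDist u1 V ≤ 2*lam + 3*δ := by
  apply real_le_of_forall_pos
  intro η hη
  have hg : 0 < dist u1 u2 - (2*lam + 6*δ) := by linarith
  set ε := min (η/4) ((dist u1 u2 - (2*lam+6*δ))/8) with hεdef
  have hεa : ε ≤ η/4 := min_le_left _ _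
  have hεb : ε ≤ (dist u1 u2 - (2*lam+6*δ))/8 := min_le_right _ _
  have hε : 0 < ε := lt_min (by linarith) (by linarith)
  obtain ⟨γ, hγ⟩ := hgeo v1 u2
  have hL1 := proj_near_geodesic δ lam hδ hlam hgeo hhyp U hU v1 u1 u2 hp1 hp2.1 γ hγ
  obtain ⟨p, hp, hup⟩ := (infDist_lt_iff ⟨v1, left_mem_geodImage hγ⟩).1
    (lt_of_le_of_lt hL1 (by linarith : lam + 2*δ < lam + 2*δ + ε))
  obtain ⟨γ₁, hγ₁⟩ := hgeo v1 v2
  obtain ⟨γ₂, hγ₂⟩ := hgeo v2 u2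
  have hslim := hhyp v1 v2 u2 γ₁ γ₂ γ hγ₁ hγ₂ hγ p hp
  have hne : (geodImage γ₁ v1 v2 ∪ geodImage γ₂ v2 u2).Nonempty :=
    ⟨v1, Or.inl (left_mem_geodImage hγ₁)⟩
  obtain ⟨q, hq, hpq⟩ := (infDist_lt_iff hne).1
    (lt_of_le_of_lt hslim (by linarith : δ < δ + ε))
  rcases hq with hq | hq
  · -- q on [v1, v2] which is λ-close to V
    have hqV : infDist q V ≤ lam := hV v1 hv1 v2 hv2 γ₁ hγ₁ q hq
    have h1 : infDist u1 V ≤ infDist q V + dist u1 q := infDist_le_infDist_add_dist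
    have h2 : dist u1 q ≤ dist u1 p + dist p q := dist_triangle _ _ _
    linarith
  · -- q on [v2, u2]: contradiction with hfar
    exfalso
    have hsum := geod_dist_eq hγ₂ hq
    have h1 : dist v2 u2 ≤ dist v2 u1 := hp2.2 u1 hp1.1
    have h2 : dist u1 q ≤ dist u1 p + dist p q := dist_triangle _ _ _
    have h3 : dist v2 u1 ≤ dist v2 q + dist q u1 := dist_triangle _ _ _
    have h4 : dist u1 u2 ≤ dist u1 q + dist q u2 := dist_triangle _ _ _
    have h5 : dist q u1 = dist u1 q := dist_comm _ _
    linarith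

/-- Step B: if some `u1 ∈ U` is `c`-close to some `v* ∈ V`, then every nearest point
projection of a point of `V` on `U` is `λ+3δ+max λ c`-close to `V`. -/
lemma proj_near_other (δ lam c : ℝ) (hδ : 0 ≤ δ) (hlam : 0 ≤ lam)
    (hgeo : GeodesicMetricSpace X) (hhyp : DeltaHyp X δ)
    (U V : Set X) (hU : QuasiconvexSet lam U) (hV : QuasiconvexSet lam V)
    (u1 vs : X) (hu1 : u1 ∈ U) (hvs : vs ∈ V) (hc : dist u1 vs ≤ c)
    (v u : X) (hv : v ∈ V) (hproj : IsNPProj v U u) :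
    infDist u V ≤ lam + 3*δ + max lam c := by
  apply real_le_of_forall_pos
  intro η hη
  set ε := η/4 with hεdef
  have hε : 0 < ε := by positivity
  obtain ⟨γ, hγ⟩ := hgeo v u1
  have hL1 := proj_near_geodesic δ lam hδ hlam hgeo hhyp U hU v u u1 hproj hu1 γ hγ
  obtain ⟨p, hp, hup⟩ := (infDist_lt_iff ⟨v, left_mem_geodImage hγ⟩).1
    (lt_of_le_of_lt hL1 (by linarith : lam + 2*δ < lam + 2*δ + ε))
  obtain ⟨γ₁, hγ₁⟩ := hgeo v vs
  obtain ⟨γ₂, hγ₂⟩ := hgeo vs u1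
  have hslim := hhyp v vs u1 γ₁ γ₂ γ hγ₁ hγ₂ hγ p hp
  have hne : (geodImage γ₁ v vs ∪ geodImage γ₂ vs u1).Nonempty :=
    ⟨v, Or.inl (left_mem_geodImage hγ₁)⟩
  obtain ⟨q, hq, hpq⟩ := (infDist_lt_iff hne).1
    (lt_of_le_of_lt hslim (by linarith : δ < δ + ε))
  rcases hq with hq | hq
  · -- q on [v, vs] which is λ-close to V
    have hqV : infDist q V ≤ lam := hV v hv vs hvs γ₁ hγ₁ q hq
    have h1 : infDist u V ≤ infDist q V + dist u q := infDist_le_infDist_add_dist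
    have h2 : dist u q ≤ dist u p + dist p q := dist_triangle _ _ _
    have h3 : lam ≤ max lam c := le_max_left _ _
    linarith
  · -- q on [vs, u1]
    have hqvs : dist vs q ≤ dist vs u1 := geod_dist_le hγ₂ hq
    have h0 : dist vs u1 = dist u1 vs := dist_comm _ _
    have h1 : infDist u V ≤ dist u vs := infDist_le_dist_of_mem hvs
    have h2 : dist u vs ≤ dist u p + dist p q + dist q vs := dist_triangle4 _ _ _ _
    have h3 : dist q vs = dist vs q := dist_comm _ _
    have h4 : c ≤ max lam c := le_max_right _ _
    linarith

lemma main_half (δ lam : ℝ) (hδ : 0 ≤ δ) (hlam : 0 ≤ lam)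
    (hgeo : GeodesicMetricSpace X) (hhyp : DeltaHyp X δ)
    (U V : Set X) (hU : QuasiconvexSet lam U) (hV : QuasiconvexSet lam V)
    (h : ¬ Metric.diam (projSet U V) ≤ 2*lam + 7*δ) :
    (∀ u ∈ projSet U V, infDist u V ≤ 4*lam + 8*δ) ∧
    (∀ w ∈ projSet V U, infDist w U ≤ 4*lam + 8*δ) ∧ U.Nonempty ∧ V.Nonempty := by
  have hpair : ∃ u1 ∈ projSet U V, ∃ u2 ∈ projSet U V, 2*lam + 7*δ < dist u1 u2 := by
    by_contra hcon
    push_neg at hcon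
    exact h (Metric.diam_le_of_forall_dist_le (by linarith) hcon)
  obtain ⟨u1, ⟨v1, hv1, hp1⟩, u2, ⟨v2, hv2, hp2⟩, hfar⟩ := hpair
  have hA : infDist u1 V ≤ 2*lam + 3*δ :=
    far_pair_near δ lam hδ hlam hgeo hhyp U V hU hV u1 u2 v1 v2 hv1 hp1 hv2 hp2 hfar
  have key : ∀ η : ℝ, 0 < η → ∃ vs ∈ V, dist u1 vs < 2*lam + 3*δ + η := by
    intro η hη
    exact (infDist_lt_iff ⟨v1, hv1⟩).1 (lt_of_le_of_lt hA (by linarith))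
  refine ⟨?_, ?_, ⟨u1, hp1.1⟩, ⟨v1, hv1⟩⟩
  · rintro u ⟨v, hv, hp⟩
    have h36 : infDist u V ≤ 3*lam + 6*δ := by
      apply real_le_of_forall_pos
      intro η hη
      obtain ⟨vs, hvs, hd⟩ := key η hη
      have hB := proj_near_other δ lam (2*lam + 3*δ + η) hδ hlam hgeo hhyp U V hU hV
        u1 vs hp1.1 hvs (le_of_lt hd) v u hv hp
      have hmax : max lam (2*lam + 3*δ + η) = 2*lam + 3*δ + η :=
        max_eq_right (by linarith)
      rw [hmax] at hB
      linarith
    linarith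
  · rintro w ⟨u, hu, hp⟩
    have h36 : infDist w U ≤ 3*lam + 6*δ := by
      apply real_le_of_forall_pos
      intro η hη
      obtain ⟨vs, hvs, hd⟩ := key η hη
      have hd' : dist vs u1 ≤ 2*lam + 3*δ + η := by
        rw [dist_comm]; exact le_of_lt hd
      have hB := proj_near_other δ lam (2*lam + 3*δ + η) hδ hlam hgeo hhyp V U hV hU
        vs u1 hvs hp1.1 hd' u w hu hp
      have hmax : max lam (2*lam + 3*δ + η) = 2*lam + 3*δ + η :=
        max_eq_right (by linarith)
      rw [hmax] at hB
      linarith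
    linarith

lemma mem_cthick {x : X} {S : Set X} {r : ℝ} (hr : 0 ≤ r)
    (hS : S.Nonempty) (h : infDist x S ≤ r) : x ∈ Metric.cthickening r S := by
  rw [Metric.mem_cthickening_iff]
  exact (ENNReal.le_ofReal_iff_toReal_le (infEdist_ne_top hS) hr).2 h

end Stmt12Aux

/-- If the pair of `λ`-quasiconvex subsets `(U, V)` is not
`(2λ + 7δ)`-cobounded, then `P_V(U) ⊆ N_{4λ+8δ}(U) ∩ V` and
`P_U(V) ⊆ N_{4λ+8δ}(V) ∩ U`. -/
theorem not_cobounded_implies_projections_close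
    {X : Type*} [MetricSpace X] (δ lam : ℝ) (hδ : 0 ≤ δ) (hlam : 0 ≤ lam)
    (hgeo : GeodesicMetricSpace X) (hhyp : DeltaHyp X δ)
    (U V : Set X) (hU : QuasiconvexSet lam U) (hV : QuasiconvexSet lam V)
    (hnc : ¬ (Metric.diam (projSet U V) ≤ 2 * lam + 7 * δ ∧
        Metric.diam (projSet V U) ≤ 2 * lam + 7 * δ)) :
    projSet V U ⊆ Metric.cthickening (4 * lam + 8 * δ) U ∩ V ∧
      projSet U V ⊆ Metric.cthickening (4 * lam + 8 * δ) V ∩ U := by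
  have hr : (0:ℝ) ≤ 4 * lam + 8 * δ := by linarith
  rcases not_and_or.1 hnc with h | h
  · obtain ⟨g1, g2, hUne, hVne⟩ :=
      Stmt12Aux.main_half δ lam hδ hlam hgeo hhyp U V hU hV h
    constructor
    · rintro w hw
      obtain ⟨u, hu, hp⟩ := hw
      exact ⟨Stmt12Aux.mem_cthick hr hUne (g2 w ⟨u, hu, hp⟩), hp.1⟩
    · rintro u hu
      obtain ⟨v, hv, hp⟩ := hu
      exact ⟨Stmt12Aux.mem_cthick hr hVne (g1 u ⟨v, hv, hp⟩), hp.1⟩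
  · obtain ⟨g1, g2, hVne, hUne⟩ :=
      Stmt12Aux.main_half δ lam hδ hlam hgeo hhyp V U hV hU h
    constructor
    · rintro w hw
      obtain ⟨u, hu, hp⟩ := hw
      exact ⟨Stmt12Aux.mem_cthick hr hUne (g1 w ⟨u, hu, hp⟩), hp.1⟩
    · rintro u hu
      obtain ⟨v, hv, hp⟩ := hu
      exact ⟨Stmt12Aux.mem_cthick hr hVne (g2 u ⟨v, hv, hp⟩), hp.1⟩
end

section
/- Given δ ≥ 0, L ≥ 1, and K ≥ 0, there exists D = D(δ, L, K) such that: if X, Y are δ-hyperbolic geodesic metric spaces, f: X → Y is an L-qi embedding, U ⊆ X is K-quasiconvex, x ∈ X, x′ is a nearest point projection of x on U in X, and y′ is a nearest point projection of f(x) on f(U) in Y, then d_Y(f(x′), y′) ≤ D. -/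
open Metric Set

/-!
Write `y' = f u` with `u ∈ U` and let `γ` be a geodesic from `x` to `u`. Slim triangles and the
quasiconvexity of `U` put `x'` within `3δ + K` of a point `γ t`. The image `f ∘ γ` is a
quasi-geodesic from `f x` to `y'`, so by the Morse lemma `f (γ t)` lies within `R(δ, L)` of a point
`z` of a geodesic from `f x` to `y'`. Because `y'` is a nearest point of `f '' U` to `f x`, every
`w ∈ f '' U` satisfies `d(w, y') ≤ 2 d(w, z)`; take `w = f x'`.

The Morse lemma is proved as in Bridson–Haefliger III.H.1.7. Let `D` be the largest distance from
a point `m` of the geodesic to the quasi-geodesic. A chain of `O(D)` steps of length `2L` avoids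
the `(D - 1)`-ball about `m` while joining two points of the geodesic on either side of `m`; in a
`δ`-hyperbolic space a geodesic stays within `δ log₂ n + 2L` of a chain of `n` such steps, so
`D = O(log D)`, which bounds `D`.
-/

universe u

lemma clog_two_le_logb_add_one {n : ℕ} {x : ℝ} (hnx : (n : ℝ) ≤ x) (hx : 1 ≤ x) :
    (Nat.clog 2 n : ℝ) ≤ Real.logb 2 x + 1 := by
  rcases le_or_gt n 1 with hn | hn
  · rw [Nat.clog_of_right_le_one hn, Nat.cast_zero]
    linarith [Real.logb_nonneg one_lt_two hx]
  · have hlt : ((Nat.clog 2 n - 1 : ℕ) : ℝ) < Real.logb 2 x := by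
      rw [Real.lt_logb_iff_rpow_lt one_lt_two (by linarith), Real.rpow_natCast]
      exact lt_of_lt_of_le (by exact_mod_cast Nat.pow_pred_clog_lt_self one_lt_two hn) hnx
    have : (Nat.clog 2 n : ℝ) ≤ (Nat.clog 2 n - 1 : ℕ) + 1 := by norm_cast; omega
    linarith

/-- From `log y ≤ ε y - log ε`, with `ε` small enough to absorb the term linear in `x`. -/
lemma exists_le_of_le_add_mul_logb (α δ A C : ℝ) (hδ : 0 ≤ δ) (hA : 0 ≤ A) (hC : 0 < C) :
    ∃ M, ∀ x, 0 ≤ x → x ≤ α + δ * Real.logb 2 (A * x + C) → x ≤ M := by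
  set k := δ / Real.log 2
  have hk : 0 ≤ k := div_nonneg hδ (Real.log_pos one_lt_two).le
  set ε := 1 / (2 * (k + 1) * (A + 1))
  have hε : 0 < ε := by positivity
  refine ⟨2 * (α + k * (ε * C - Real.log ε)), fun x hx h => ?_⟩
  have hy : 0 < A * x + C := by positivity
  have hlog : Real.log (A * x + C) ≤ ε * (A * x + C) - Real.log ε := by
    have := Real.log_le_sub_one_of_pos (mul_pos hε hy)
    rw [Real.log_mul hε.ne' hy.ne'] at this
    linarith
  have hkεA : k * ε * A ≤ 1 / 2 := by
    rw [show k * ε * A = k * A / (2 * (k + 1) * (A + 1)) by ring, div_le_iff₀ (by positivity)]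
    nlinarith
  have h' : x ≤ α + k * (ε * C - Real.log ε) + k * ε * A * x := by
    have : δ * Real.logb 2 (A * x + C) = k * Real.log (A * x + C) := by
      rw [Real.logb]; ring
    nlinarith [mul_le_mul_of_nonneg_left hlog hk]
  nlinarith [mul_le_mul_of_nonneg_right hkεA hx]

section

variable {Z : Type*} [MetricSpace Z]

namespace IsGeodesicFrom

variable {γ : ℝ → Z} {a b : Z}

lemma dist_eq (h : IsGeodesicFrom γ a b) {s t : ℝ} (hs : s ∈ Icc 0 (dist a b))
    (ht : t ∈ Icc 0 (dist a b)) : dist (γ s) (γ t) = |s - t| :=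
  h.2.2 s hs t ht

lemma left_mem_geodImage (h : IsGeodesicFrom γ a b) : a ∈ geodImage γ a b :=
  ⟨0, ⟨le_rfl, dist_nonneg⟩, h.1⟩

lemma right_mem_geodImage (h : IsGeodesicFrom γ a b) : b ∈ geodImage γ a b :=
  ⟨dist a b, ⟨dist_nonneg, le_rfl⟩, h.2.1⟩

lemma dist_left_add_dist_right (h : IsGeodesicFrom γ a b) {p : Z} (hp : p ∈ geodImage γ a b) :
    dist a p + dist p b = dist a b := by
  obtain ⟨s, hs, rfl⟩ := hp
  have h₀ : (0 : ℝ) ∈ Icc 0 (dist a b) := ⟨le_rfl, dist_nonneg⟩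
  have h₁ : dist a b ∈ Icc 0 (dist a b) := ⟨dist_nonneg, le_rfl⟩
  conv_lhs => rw [← h.1, ← h.2.1, h.dist_eq h₀ hs, h.dist_eq hs h₁]
  rw [abs_of_nonpos (by linarith [hs.1]), abs_of_nonpos (by linarith [hs.2])]
  ring

lemma dist_left_le (h : IsGeodesicFrom γ a b) {p : Z} (hp : p ∈ geodImage γ a b) :
    dist a p ≤ dist a b := by
  linarith [h.dist_left_add_dist_right hp, dist_nonneg (x := p) (y := b)]

lemma dist_right_le (h : IsGeodesicFrom γ a b) {p : Z} (hp : p ∈ geodImage γ a b) :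
    dist p b ≤ dist a b := by
  linarith [h.dist_left_add_dist_right hp, dist_nonneg (x := a) (y := p)]

lemma continuousOn (h : IsGeodesicFrom γ a b) : ContinuousOn γ (Icc 0 (dist a b)) :=
  (LipschitzOnWith.of_dist_le_mul (K := 1) fun s hs t ht => by
    simp [h.dist_eq hs ht, Real.dist_eq]).continuousOn

lemma isCompact_geodImage (h : IsGeodesicFrom γ a b) : IsCompact (geodImage γ a b) :=
  isCompact_Icc.image_of_continuousOn h.continuousOn

lemma exists_subsegment (h : IsGeodesicFrom γ a b) {s r t : ℝ} (hs : 0 ≤ s) (hsr : s ≤ r)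
    (hrt : r ≤ t) (ht : t ≤ dist a b) :
    ∃ γ' : ℝ → Z, IsGeodesicFrom γ' (γ s) (γ t) ∧ γ r ∈ geodImage γ' (γ s) (γ t) := by
  have hd : dist (γ s) (γ t) = t - s := by
    rw [h.dist_eq ⟨hs, by linarith⟩ ⟨by linarith, ht⟩, abs_of_nonpos (by linarith)]
    ring
  refine ⟨fun q => γ (s + q), ⟨by simp, by simp [hd], fun q hq q' hq' => ?_⟩,
    ⟨r - s, by rw [hd]; constructor <;> linarith, by simp⟩⟩
  rw [hd] at hq hq'
  rw [h.dist_eq ⟨by linarith [hq.1], by linarith [hq.2]⟩ ⟨by linarith [hq'.1], by linarith [hq'.2]⟩]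
  ring_nf

/-- The intermediate value theorem along `γ`, applied to `infDist · A - infDist · B`. -/
lemma exists_infDist_le_both (h : IsGeodesicFrom γ a b) {A B : Set Z} (ha : a ∈ A) (hb : b ∈ B)
    {r : ℝ} (hr : ∀ p ∈ geodImage γ a b, infDist p (A ∪ B) ≤ r) :
    ∃ w ∈ geodImage γ a b, infDist w A ≤ r ∧ infDist w B ≤ r := by
  have hcont : ContinuousOn (fun s => infDist (γ s) A - infDist (γ s) B) (Icc 0 (dist a b)) :=
    ((continuous_infDist_pt A).comp_continuousOn h.continuousOn).sub
      ((continuous_infDist_pt B).comp_continuousOn h.continuousOn)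
  have h₀ : infDist (γ 0) A - infDist (γ 0) B ≤ 0 := by
    rw [h.1, infDist_zero_of_mem ha]; linarith [infDist_nonneg (x := a) (s := B)]
  have h₁ : 0 ≤ infDist (γ (dist a b)) A - infDist (γ (dist a b)) B := by
    rw [h.2.1, infDist_zero_of_mem hb]; linarith [infDist_nonneg (x := b) (s := A)]
  obtain ⟨s, hs, hAB⟩ := intermediate_value_Icc dist_nonneg hcont ⟨h₀, h₁⟩
  have hAB : infDist (γ s) A = infDist (γ s) B := sub_eq_zero.1 hAB
  have hA : infDist (γ s) A ≤ infDist (γ s) (A ∪ B) := by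
    refine (le_infDist ⟨a, Or.inl ha⟩).2 fun y hy => hy.elim infDist_le_dist_of_mem fun hy => ?_
    exact hAB ▸ infDist_le_dist_of_mem hy
  have hw := hr _ ⟨s, hs, rfl⟩
  exact ⟨γ s, ⟨s, hs, rfl⟩, by linarith, by linarith⟩

end IsGeodesicFrom

lemma IsCompact.exists_dist_le_of_infDist_le {s : Set Z} (hs : IsCompact s) (hne : s.Nonempty)
    {x : Z} {r : ℝ} (h : infDist x s ≤ r) : ∃ y ∈ s, dist x y ≤ r := by
  obtain ⟨y, hy, hxy⟩ := hs.exists_infDist_eq_dist hne x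
  exact ⟨y, hy, hxy ▸ h⟩

lemma IsNPProj.dist_le_infDist {x u : Z} {U : Set Z} (h : IsNPProj x U u) :
    dist x u ≤ infDist x U :=
  (le_infDist ⟨u, h.1⟩).2 h.2

lemma IsNPProj.dist_le_two_mul_dist {a y w z : Z} {S : Set Z} {σ : ℝ → Z} (hy : IsNPProj a S y)
    (hw : w ∈ S) (hσ : IsGeodesicFrom σ a y) (hz : z ∈ geodImage σ a y) :
    dist w y ≤ 2 * dist w z := by
  have := hσ.dist_left_add_dist_right hz
  linarith [hy.2 w hw, dist_triangle a z w, dist_triangle w z y, dist_comm z w]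

theorem IsNPProj.exists_dist_le_of_quasiconvexSet {δ K : ℝ} (hgeo : GeodesicMetricSpace Z)
    (hhyp : DeltaHyp Z δ) {U : Set Z} (hU : QuasiconvexSet K U) {x x' u : Z}
    (hx' : IsNPProj x U x') (hu : u ∈ U) {γ : ℝ → Z} (hγ : IsGeodesicFrom γ x u) :
    ∃ w ∈ geodImage γ x u, dist x' w ≤ 3 * δ + K := by
  obtain ⟨η₁, hη₁⟩ := hgeo x x'
  obtain ⟨η₂, hη₂⟩ := hgeo x' u
  obtain ⟨w, hw, hw₁, hw₂⟩ := hγ.exists_infDist_le_both hη₁.left_mem_geodImage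
    hη₂.right_mem_geodImage (hhyp x x' u η₁ η₂ γ hη₁ hη₂ hγ)
  obtain ⟨a', ha', hwa'⟩ := hη₁.isCompact_geodImage.exists_dist_le_of_infDist_le
    ⟨x, hη₁.left_mem_geodImage⟩ hw₁
  obtain ⟨b', hb', hwb'⟩ := hη₂.isCompact_geodImage.exists_dist_le_of_infDist_le
    ⟨u, hη₂.right_mem_geodImage⟩ hw₂
  have hxx' : dist x x' ≤ K + dist x b' :=
    calc dist x x' ≤ infDist x U := hx'.dist_le_infDist
      _ ≤ infDist b' U + dist x b' := infDist_le_infDist_add_dist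
      _ ≤ K + dist x b' := by gcongr; exact hU x' hx'.1 u hu η₂ hη₂ b' hb'
  refine ⟨w, hw, ?_⟩
  linarith [hη₁.dist_left_add_dist_right ha', dist_triangle x a' b', dist_triangle a' w b',
    dist_triangle x' a' w, dist_comm x' a', dist_comm w a']

def ChainIn (S : Set Z) (B : ℝ) (n : ℕ) (a b : Z) : Prop :=
  ∃ y : ℕ → Z, y 0 = a ∧ y n = b ∧ (∀ i < n, dist (y i) (y (i + 1)) ≤ B) ∧ ∀ i ≤ n, y i ∈ S

namespace ChainIn

variable {S S' : Set Z} {B B' : ℝ} {n m : ℕ} {a b c : Z}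

lemma left_mem (h : ChainIn S B n a b) : a ∈ S := by
  obtain ⟨y, rfl, -, -, hS⟩ := h
  exact hS 0 (Nat.zero_le n)

lemma mono (h : ChainIn S B n a b) (hS : S ⊆ S') (hB : B ≤ B') : ChainIn S' B' n a b := by
  obtain ⟨y, h₀, hn, hstep, hmem⟩ := h
  exact ⟨y, h₀, hn, fun i hi => (hstep i hi).trans hB, fun i hi => hS (hmem i hi)⟩

lemma symm (h : ChainIn S B n a b) : ChainIn S B n b a := by
  obtain ⟨y, h₀, hn, hstep, hmem⟩ := h
  refine ⟨fun i => y (n - i), by simpa, by simpa, fun i hi => ?_, fun i _ => hmem _ (by omega)⟩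
  have : n - i = n - (i + 1) + 1 := by omega
  simp only [this, dist_comm (y (n - (i + 1) + 1))]
  exact hstep _ (by omega)

lemma trans (h₁ : ChainIn S B n a b) (h₂ : ChainIn S B m b c) : ChainIn S B (n + m) a c := by
  obtain ⟨y, hy₀, hyn, hystep, hymem⟩ := h₁
  obtain ⟨z, hz₀, hzm, hzstep, hzmem⟩ := h₂
  refine ⟨fun i => if i ≤ n then y i else z (i - n), by simpa, ?_, fun i hi => ?_, fun i hi => ?_⟩
  · rcases Nat.eq_zero_or_pos m with rfl | hm
    · simpa [hyn, ← hz₀] using hzm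
    · simpa [show ¬ n + m ≤ n by omega]
  · by_cases hin : i < n
    · simpa [hin.le, show i + 1 ≤ n by omega] using hystep i hin
    · by_cases hi' : i = n
      · subst hi'
        simpa [hyn, ← hz₀] using hzstep 0 (by omega)
      · simpa [hin, show ¬ i ≤ n by omega, show i + 1 - n = i - n + 1 by omega] using
          hzstep (i - n) (by omega)
  · by_cases hin : i ≤ n
    · simpa [hin] using hymem i hin
    · simpa [hin] using hzmem (i - n) (by omega)

lemma split (h : ChainIn S B n a b) {k : ℕ} (hk : k ≤ n) :
    ∃ c, ChainIn S B k a c ∧ ChainIn S B (n - k) c b := by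
  obtain ⟨y, h₀, hn, hstep, hmem⟩ := h
  refine ⟨y k, ⟨y, h₀, rfl, fun i hi => hstep i (by omega), fun i hi => hmem i (by omega)⟩,
    ⟨fun i => y (k + i), by simp, by simpa [Nat.add_sub_cancel' hk], fun i hi => ?_,
      fun i hi => hmem _ (by omega)⟩⟩
  simpa [← add_assoc] using hstep (k + i) (by omega)

/-- Split the chain in half and use a slim triangle. -/
theorem infDist_le_of_le_pow {δ : ℝ} (hgeo : GeodesicMetricSpace Z) (hhyp : DeltaHyp Z δ)
    (hB : 0 ≤ B) {k : ℕ} :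
    ∀ {n : ℕ} {a b : Z} {σ : ℝ → Z}, n ≤ 2 ^ k → ChainIn S B n a b → IsGeodesicFrom σ a b →
      ∀ p ∈ geodImage σ a b, infDist p S ≤ δ * k + B := by
  induction k with
  | zero =>
    rintro n a b σ hn ⟨y, rfl, rfl, hstep, hmem⟩ hσ p hp
    have hy : dist (y 0) (y n) ≤ B := by
      interval_cases n
      · simpa using hB
      · exact hstep 0 zero_lt_one
    calc infDist p S ≤ dist p (y 0) := infDist_le_dist_of_mem (hmem 0 (Nat.zero_le n))
      _ ≤ δ * (0 : ℕ) + B := by simpa [dist_comm p] using (hσ.dist_left_le hp).trans hy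
  | succ k ih =>
    intro n a b σ hn hch hσ p hp
    rw [pow_succ] at hn
    obtain ⟨c, h₁, h₂⟩ := hch.split (k := (n + 1) / 2) (by omega)
    obtain ⟨σ₁, hσ₁⟩ := hgeo a c
    obtain ⟨σ₂, hσ₂⟩ := hgeo c b
    obtain ⟨w, hw, hpw⟩ :=
      (hσ₁.isCompact_geodImage.union hσ₂.isCompact_geodImage).exists_dist_le_of_infDist_le
      ⟨a, Or.inl hσ₁.left_mem_geodImage⟩ (hhyp a c b σ₁ σ₂ σ hσ₁ hσ₂ hσ p hp)
    have hwS : infDist w S ≤ δ * k + B :=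
      hw.elim (ih (by omega) h₁ hσ₁ w) (ih (by omega) h₂ hσ₂ w)
    calc infDist p S ≤ infDist w S + dist p w := infDist_le_infDist_add_dist
      _ ≤ δ * (k + 1 : ℕ) + B := by push_cast; linarith

end ChainIn

lemma chainIn_of_unit_step {g : ℝ → Z} {d B : ℝ} (hd : 0 ≤ d)
    (hg : ∀ r ∈ Icc 0 d, ∀ r' ∈ Icc 0 d, |r - r'| ≤ 1 → dist (g r) (g r') ≤ B) :
    ChainIn (g '' Icc 0 d) B ⌈d⌉₊ (g 0) (g d) := by
  have hmem : ∀ i : ℕ, min (i : ℝ) d ∈ Icc 0 d :=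
    fun i => ⟨le_min i.cast_nonneg hd, min_le_right _ _⟩
  refine ⟨fun i => g (min i d), by simp [hd], by simp [Nat.le_ceil], fun i _ => ?_,
    fun i _ => ⟨_, hmem i, rfl⟩⟩
  refine hg _ (hmem i) _ (hmem (i + 1)) ((abs_min_sub_min_le_max _ _ _ _).trans ?_)
  simp

lemma IsGeodesicFrom.chainIn {γ : ℝ → Z} {a b : Z} (h : IsGeodesicFrom γ a b) :
    ChainIn (geodImage γ a b) 1 ⌈dist a b⌉₊ a b := by
  have := chainIn_of_unit_step (g := γ) dist_nonneg fun r hr r' hr' hrr' =>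
    (h.dist_eq hr hr').le.trans hrr'
  rwa [h.1, h.2.1] at this

structure IsQuasiGeodesicFrom (L T : ℝ) (c : ℝ → Z) (a b : Z) : Prop where
  nonneg : 0 ≤ T
  apply_zero : c 0 = a
  apply_right : c T = b
  lower : ∀ s ∈ Icc 0 T, ∀ t ∈ Icc 0 T, |s - t| / L - L ≤ dist (c s) (c t)
  upper : ∀ s ∈ Icc 0 T, ∀ t ∈ Icc 0 T, dist (c s) (c t) ≤ L * |s - t| + L

lemma IsGeodesicFrom.isQuasiGeodesicFrom_comp {Y : Type*} [MetricSpace Y] {L : ℝ} {f : Z → Y}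
    (hf : ∀ x x' : Z, dist x x' / L - L ≤ dist (f x) (f x') ∧
      dist (f x) (f x') ≤ L * dist x x' + L)
    {γ : ℝ → Z} {a b : Z} (hγ : IsGeodesicFrom γ a b) :
    IsQuasiGeodesicFrom L (dist a b) (f ∘ γ) (f a) (f b) where
  nonneg := dist_nonneg
  apply_zero := by simp [hγ.1]
  apply_right := by simp [hγ.2.1]
  lower s hs t ht := hγ.dist_eq hs ht ▸ (hf (γ s) (γ t)).1
  upper s hs t ht := hγ.dist_eq hs ht ▸ (hf (γ s) (γ t)).2

namespace IsQuasiGeodesicFrom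

variable {L T : ℝ} {c : ℝ → Z} {a b : Z}

lemma const_nonneg (hc : IsQuasiGeodesicFrom L T c a b) : 0 ≤ L := by
  have h₀ : (0 : ℝ) ∈ Icc 0 T := ⟨le_rfl, hc.nonneg⟩
  simpa using (dist_nonneg.trans (hc.upper 0 h₀ 0 h₀))

lemma abs_sub_le (hc : IsQuasiGeodesicFrom L T c a b) (hL : 0 < L) {s t : ℝ} (hs : s ∈ Icc 0 T)
    (ht : t ∈ Icc 0 T) : |s - t| ≤ L * (dist (c s) (c t) + L) := by
  have := hc.lower s hs t ht
  rw [sub_le_iff_le_add, div_le_iff₀ hL] at this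
  linarith

lemma chainIn (hc : IsQuasiGeodesicFrom L T c a b) {s t : ℝ} (hs : s ∈ Icc 0 T)
    (ht : t ∈ Icc 0 T) :
    ∃ n : ℕ, (n : ℝ) ≤ |s - t| + 1 ∧ ChainIn (c '' Icc 0 T) (2 * L) n (c s) (c t) := by
  wlog hst : s ≤ t generalizing s t
  · obtain ⟨n, hn, h⟩ := this ht hs (le_of_not_ge hst)
    exact ⟨n, by rwa [abs_sub_comm], h.symm⟩
  have hg : ∀ r ∈ Icc 0 (t - s), s + r ∈ Icc 0 T :=
    fun r hr => ⟨by linarith [hs.1, hr.1], by linarith [ht.2, hr.2]⟩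
  have hchain := chainIn_of_unit_step (g := fun r => c (s + r)) (B := 2 * L) (sub_nonneg.2 hst)
    fun r hr r' hr' hrr' => by
      have := hc.upper _ (hg r hr) _ (hg r' hr')
      rw [add_sub_add_left_eq_sub] at this
      nlinarith [abs_nonneg (r - r'), hc.const_nonneg]
  simp only [add_zero, add_sub_cancel] at hchain
  refine ⟨_, ?_, hchain.mono (image_subset_iff.2 fun r hr => ⟨s + r, hg r hr, rfl⟩) le_rfl⟩
  rw [abs_sub_comm, abs_of_nonneg (sub_nonneg.2 hst)]
  exact (Nat.ceil_lt_add_one (sub_nonneg.2 hst)).le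

end IsQuasiGeodesicFrom

lemma exists_chainIn_far (hgeo : GeodesicMetricSpace Z) {S : Set Z} {m p : Z} {D : ℝ}
    (hS : ∀ z ∈ S, D ≤ dist m z) (hne : S.Nonempty) (hp : infDist p S ≤ D)
    (h : dist m p = 2 * D ∨ p ∈ S) :
    ∃ q ∈ S, dist p q ≤ D + 1 ∧
      ∃ n : ℕ, (n : ℝ) ≤ D + 2 ∧ ChainIn {z | D - 1 ≤ dist m z} 1 n p q := by
  obtain ⟨q, hq, hpq, hfar⟩ : ∃ q ∈ S, dist p q ≤ D + 1 ∧ D - 1 ≤ dist m p - dist p q := by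
    rcases h with h | h
    · obtain ⟨q, hq, hpq⟩ := (infDist_lt_iff hne).1 (hp.trans_lt (lt_add_one D))
      exact ⟨q, hq, hpq.le, by linarith⟩
    · have hD : 0 ≤ D := infDist_nonneg.trans hp
      exact ⟨p, h, by simp; linarith, by simp; linarith [hS p h]⟩
  obtain ⟨α, hα⟩ := hgeo p q
  refine ⟨q, hq, hpq, _, (Nat.ceil_lt_add_one dist_nonneg).le.trans (by linarith),
    hα.chainIn.mono (fun z hz => ?_) le_rfl⟩
  show D - 1 ≤ dist m z
  linarith [hα.dist_left_le hz, dist_triangle m z p, dist_comm z p]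

namespace IsQuasiGeodesicFrom

variable {L T : ℝ} {c σ : ℝ → Z} {a b : Z}

/-- The detour of the Morse lemma: it runs from `σ (s₀ - 2D)` to `σ (s₀ + 2D)` (cut off at the ends
of `σ`) through the quasi-geodesic, in `O(D)` steps, outside the `(D - 1)`-ball about `σ s₀`. -/
theorem exists_chainIn_far_of_isMaxOn (hgeo : GeodesicMetricSpace Z) (hL : 1 ≤ L)
    (hc : IsQuasiGeodesicFrom L T c a b) (hσ : IsGeodesicFrom σ a b) {s₀ : ℝ}
    (hs₀ : s₀ ∈ Icc 0 (dist a b))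
    (hmax : IsMaxOn (fun s => infDist (σ s) (c '' Icc 0 T)) (Icc 0 (dist a b)) s₀) :
    ∃ (p q : Z) (σ' : ℝ → Z) (N : ℕ), IsGeodesicFrom σ' p q ∧ σ s₀ ∈ geodImage σ' p q ∧
      (N : ℝ) ≤ (6 * L + 2) * infDist (σ s₀) (c '' Icc 0 T) + (L ^ 2 + 2 * L + 5) ∧
      ChainIn {z | infDist (σ s₀) (c '' Icc 0 T) - 1 ≤ dist (σ s₀) z} (2 * L) N p q := by
  set S := c '' Icc 0 T
  set D := infDist (σ s₀) S
  have hSne : S.Nonempty := ⟨c 0, 0, ⟨le_rfl, hc.nonneg⟩, rfl⟩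
  have hfar : ∀ z ∈ S, D ≤ dist (σ s₀) z := fun z hz => infDist_le_dist_of_mem hz
  have hD : 0 ≤ D := infDist_nonneg
  set s₁ := max 0 (s₀ - 2 * D)
  set s₂ := min (dist a b) (s₀ + 2 * D)
  have hs₁ : s₁ ∈ Icc 0 (dist a b) := ⟨le_max_left _ _, max_le dist_nonneg (by linarith [hs₀.2])⟩
  have hs₂ : s₂ ∈ Icc 0 (dist a b) := ⟨le_min dist_nonneg (by linarith [hs₀.1]), min_le_left _ _⟩
  have hs₁₀ : s₁ ≤ s₀ := max_le hs₀.1 (by linarith)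
  have hs₀₂ : s₀ ≤ s₂ := le_min hs₀.2 (by linarith)
  have hd₁ : dist (σ s₀) (σ s₁) = s₀ - s₁ := by
    rw [hσ.dist_eq hs₀ hs₁, abs_of_nonneg (by linarith)]
  have hd₂ : dist (σ s₀) (σ s₂) = s₂ - s₀ := by
    rw [hσ.dist_eq hs₀ hs₂, abs_of_nonpos (by linarith)]; ring
  have h₁ : dist (σ s₀) (σ s₁) = 2 * D ∨ σ s₁ ∈ S := by
    rcases le_total 0 (s₀ - 2 * D) with h | h
    · left; rw [hd₁, show s₁ = s₀ - 2 * D from max_eq_right h]; ring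
    · right
      rw [show s₁ = 0 from max_eq_left h, hσ.1, ← hc.apply_zero]
      exact ⟨0, ⟨le_rfl, hc.nonneg⟩, rfl⟩
  have h₂ : dist (σ s₀) (σ s₂) = 2 * D ∨ σ s₂ ∈ S := by
    rcases le_total (dist a b) (s₀ + 2 * D) with h | h
    · right
      rw [show s₂ = dist a b from min_eq_left h, hσ.2.1, ← hc.apply_right]
      exact ⟨T, ⟨hc.nonneg, le_rfl⟩, rfl⟩
    · left; rw [hd₂, show s₂ = s₀ + 2 * D from min_eq_right h]; ring
  obtain ⟨_, ⟨t₁, ht₁, rfl⟩, hp₁, n₁, hn₁, hch₁⟩ :=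
    exists_chainIn_far hgeo hfar hSne (hmax hs₁) h₁
  obtain ⟨_, ⟨t₂, ht₂, rfl⟩, hp₂, n₃, hn₃, hch₃⟩ :=
    exists_chainIn_far hgeo hfar hSne (hmax hs₂) h₂
  obtain ⟨n₂, hn₂, hch₂⟩ := hc.chainIn ht₁ ht₂
  obtain ⟨σ', hσ', hm⟩ := hσ.exists_subsegment hs₁.1 hs₁₀ hs₀₂ hs₂.2
  have ht₁₂ : |t₁ - t₂| ≤ L * (6 * D + 2 + L) := by
    refine (hc.abs_sub_le (by linarith) ht₁ ht₂).trans (mul_le_mul_of_nonneg_left ?_ (by linarith))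
    have := dist_triangle4 (c t₁) (σ s₁) (σ s₀) (c t₂)
    have := dist_triangle (σ s₀) (σ s₂) (c t₂)
    linarith [dist_comm (c t₁) (σ s₁), dist_comm (σ s₁) (σ s₀), le_max_right 0 (s₀ - 2 * D),
      min_le_right (dist a b) (s₀ + 2 * D)]
  refine ⟨σ s₁, σ s₂, σ', n₁ + n₂ + n₃, hσ', hm, ?_, ?_⟩
  · push_cast
    nlinarith
  · refine ((hch₁.mono subset_rfl (by linarith)).trans (hch₂.mono (fun z hz => ?_) le_rfl)).trans
      (hch₃.symm.mono subset_rfl (by linarith))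
    exact (sub_le_self D zero_le_one).trans (hfar z hz)

theorem infDist_le_of_isMaxOn {δ : ℝ} (hδ : 0 ≤ δ) (hgeo : GeodesicMetricSpace Z)
    (hhyp : DeltaHyp Z δ) (hL : 1 ≤ L) (hc : IsQuasiGeodesicFrom L T c a b)
    (hσ : IsGeodesicFrom σ a b) {s₀ : ℝ} (hs₀ : s₀ ∈ Icc 0 (dist a b))
    (hmax : IsMaxOn (fun s => infDist (σ s) (c '' Icc 0 T)) (Icc 0 (dist a b)) s₀) :
    infDist (σ s₀) (c '' Icc 0 T) ≤ 1 + 2 * L + δ +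
      δ * Real.logb 2 ((6 * L + 2) * infDist (σ s₀) (c '' Icc 0 T) + (L ^ 2 + 2 * L + 5)) := by
  obtain ⟨p, q, σ', N, hσ', hm, hN, hch⟩ := hc.exists_chainIn_far_of_isMaxOn hgeo hL hσ hs₀ hmax
  set D := infDist (σ s₀) (c '' Icc 0 T)
  have hfar : D - 1 ≤ infDist (σ s₀) {z | D - 1 ≤ dist (σ s₀) z} :=
    (le_infDist ⟨p, hch.left_mem⟩).2 fun z hz => hz
  have hnear := hch.infDist_le_of_le_pow hgeo hhyp (by linarith) (Nat.le_pow_clog one_lt_two N)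
    hσ' _ hm
  have hD : 0 ≤ D := infDist_nonneg
  have hlog := clog_two_le_logb_add_one hN (by nlinarith)
  nlinarith [mul_le_mul_of_nonneg_left hlog hδ]

lemma exists_dist_le_of_forall_infDist_le (hL : 0 < L) (hc : IsQuasiGeodesicFrom L T c a b)
    (hσ : IsGeodesicFrom σ a b) {R : ℝ}
    (hR : ∀ p ∈ geodImage σ a b, infDist p (c '' Icc 0 T) ≤ R) {t : ℝ} (ht : t ∈ Icc 0 T) :
    ∃ z ∈ geodImage σ a b, dist (c t) z ≤ L ^ 2 * (2 * R + 2 + L) + L + R + 1 := by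
  have hA : (c '' Icc 0 t).Nonempty := ⟨c 0, 0, ⟨le_rfl, ht.1⟩, rfl⟩
  have hB : (c '' Icc t T).Nonempty := ⟨c T, T, ⟨ht.2, le_rfl⟩, rfl⟩
  obtain ⟨w, hw, hwA, hwB⟩ := hσ.exists_infDist_le_both (A := c '' Icc 0 t) (B := c '' Icc t T)
    ⟨0, ⟨le_rfl, ht.1⟩, hc.apply_zero⟩ ⟨T, ⟨ht.2, le_rfl⟩, hc.apply_right⟩
    (by rwa [← image_union, Icc_union_Icc_eq_Icc ht.1 ht.2])
  obtain ⟨_, ⟨t₁, ht₁, rfl⟩, hw₁⟩ := (infDist_lt_iff hA).1 (hwA.trans_lt (lt_add_one R))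
  obtain ⟨_, ⟨t₂, ht₂, rfl⟩, hw₂⟩ := (infDist_lt_iff hB).1 (hwB.trans_lt (lt_add_one R))
  have ht₁' : t₁ ∈ Icc 0 T := ⟨ht₁.1, ht₁.2.trans ht.2⟩
  have ht₂' : t₂ ∈ Icc 0 T := ⟨ht.1.trans ht₂.1, ht₂.2⟩
  have ht₁₂ : |t₁ - t₂| ≤ L * (2 * R + 2 + L) := by
    refine (hc.abs_sub_le hL ht₁' ht₂').trans (mul_le_mul_of_nonneg_left ?_ hL.le)
    linarith [dist_triangle (c t₁) w (c t₂), dist_comm (c t₁) w]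
  have htt₁ : |t - t₁| ≤ |t₁ - t₂| := by
    rw [abs_of_nonneg (by linarith [ht₁.2]), abs_of_nonpos (by linarith [ht₁.2, ht₂.1])]
    linarith [ht₂.1]
  refine ⟨w, hw, ?_⟩
  have := hc.upper t ht t₁ ht₁'
  nlinarith [dist_triangle (c t) (c t₁) w, dist_comm (c t₁) w]

end IsQuasiGeodesicFrom

theorem morse_lemma (δ L : ℝ) (hδ : 0 ≤ δ) (hL : 1 ≤ L) :
    ∃ R : ℝ, ∀ (Z : Type u) [MetricSpace Z], GeodesicMetricSpace Z → DeltaHyp Z δ →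
      ∀ {T : ℝ} {c σ : ℝ → Z} {a b : Z}, IsQuasiGeodesicFrom L T c a b → IsGeodesicFrom σ a b →
        ∀ t ∈ Icc 0 T, ∃ z ∈ geodImage σ a b, dist (c t) z ≤ R := by
  obtain ⟨M, hM⟩ := exists_le_of_le_add_mul_logb (1 + 2 * L + δ) δ (6 * L + 2)
    (L ^ 2 + 2 * L + 5) hδ (by linarith) (by positivity)
  refine ⟨L ^ 2 * (2 * M + 2 + L) + L + M + 1, fun Z _ hgeo hhyp T c σ a b hc hσ t ht => ?_⟩
  obtain ⟨s₀, hs₀, hmax⟩ := isCompact_Icc.exists_isMaxOn (nonempty_Icc.2 dist_nonneg)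
    ((continuous_infDist_pt _).comp_continuousOn hσ.continuousOn)
  refine hc.exists_dist_le_of_forall_infDist_le (by linarith) hσ (fun p ⟨s, hs, hp⟩ => ?_) ht
  rw [← hp]
  exact (hmax hs).trans (hM _ infDist_nonneg (hc.infDist_le_of_isMaxOn hδ hgeo hhyp hL hσ hs₀ hmax))

end

theorem npp_commutes_with_qi_embedding_general (δ L K : ℝ)
    (hδ : 0 ≤ δ) (hL : 1 ≤ L) :
    ∃ D : ℝ, ∀ (X : Type*) (Y : Type*) [MetricSpace X] [MetricSpace Y],
      GeodesicMetricSpace X → GeodesicMetricSpace Y →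
      DeltaHyp X δ → DeltaHyp Y δ →
      ∀ f : X → Y,
        (∀ x x' : X, dist x x' / L - L ≤ dist (f x) (f x') ∧
            dist (f x) (f x') ≤ L * dist x x' + L) →
        ∀ U : Set X, QuasiconvexSet K U →
          ∀ (x x' : X) (y' : Y),
            IsNPProj x U x' → IsNPProj (f x) (f '' U) y' →
            dist (f x') y' ≤ D := by
  obtain ⟨R, hR⟩ := morse_lemma δ L hδ hL
  refine ⟨2 * (L * (3 * δ + K) + L + R), ?_⟩
  intro X Y _ _ hgX hgY hhX hhY f hf U hU x x' y' hx' hy'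
  obtain ⟨u, hu, rfl⟩ := hy'.1
  obtain ⟨γ, hγ⟩ := hgX x u
  obtain ⟨_, ⟨t, ht, rfl⟩, hx't⟩ := hx'.exists_dist_le_of_quasiconvexSet hgX hhX hU hu hγ
  obtain ⟨σ, hσ⟩ := hgY (f x) (f u)
  obtain ⟨z, hz, htz⟩ := hR Y hgY hhY (hγ.isQuasiGeodesicFrom_comp hf) hσ t ht
  have hfx' : dist (f x') (f (γ t)) ≤ L * (3 * δ + K) + L :=
    (hf x' (γ t)).2.trans (by gcongr)
  calc dist (f x') (f u) ≤ 2 * dist (f x') z := hy'.dist_le_two_mul_dist ⟨x', hx'.1, rfl⟩ hσ hz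
    _ ≤ 2 * (dist (f x') (f (γ t)) + dist (f (γ t)) z) := by gcongr; exact dist_triangle _ _ _
    _ ≤ 2 * (L * (3 * δ + K) + L + R) := by gcongr; exact htz

/-- Nearest point projection onto a `K`-quasiconvex subset coarsely
commutes with an `L`-qi embedding between `δ`-hyperbolic geodesic metric spaces. -/
theorem npp_commutes_with_qi_embedding (δ L K : ℝ)
    (hδ : 0 ≤ δ) (hL : 1 ≤ L) (hK : 0 ≤ K) :
    ∃ D : ℝ, ∀ (X : Type*) (Y : Type*) [MetricSpace X] [MetricSpace Y],
      GeodesicMetricSpace X → GeodesicMetricSpace Y →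
      DeltaHyp X δ → DeltaHyp Y δ →
      ∀ f : X → Y,
        (∀ x x' : X, dist x x' / L - L ≤ dist (f x) (f x') ∧
            dist (f x) (f x') ≤ L * dist x x' + L) →
        ∀ U : Set X, QuasiconvexSet K U →
          ∀ (x x' : X) (y' : Y),
            IsNPProj x U x' → IsNPProj (f x) (f '' U) y' →
            dist (f x') y' ≤ D :=
  npp_commutes_with_qi_embedding_general δ L K hδ hL
end

section
/- Let p: 𝔛 → 𝔅 be a surjective 1-Lipschitz map between geodesic metric spaces with fibers 𝔉_a = p⁻¹(a) that are geodesic spaces f-properly embedded in 𝔛 (f a proper function). Suppose k ≥ 1 and p satisfies uniform k-flaring with threshold constant M_k. Then for every C ≥ 0 there exists R = R(k, C) > C such that: if γ₁, γ₂ are two k-qi lifts of a geodesic γ: [0, r] → 𝔅 with max{d_{γ(0)}(γ₁(0), γ₂(0)), d_{γ(r)}(γ₁(r), γ₂(r))} ≤ C, then for all integer times i ∈ [0, r] and at i = r, the fiber distance d_{γ(i)}(γ₁(i), γ₂(i)) ≤ R. -/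
open Metric Set

open scoped ENNReal

/-- The induced path (length) distance on a subset `Z` of `X`: the infimum of the
lengths (total variations) of continuous paths in `Z` joining the two points. -/
noncomputable def inducedPathDist {X : Type*} [MetricSpace X] (Z : Set X) (x y : X) : ℝ≥0∞ :=
  ⨅ (γ : ℝ → X) (_ : ContinuousOn γ (Set.Icc 0 1)) (_ : Set.MapsTo γ (Set.Icc 0 1) Z)
    (_ : γ 0 = x) (_ : γ 1 = y), eVariationOn γ (Set.Icc 0 1)

/-- A proper function `ℝ≥0 → ℝ≥0` (modelled on `ℝ`): nonnegative, monotone, and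
diverging at infinity. -/
def ProperFun (f : ℝ → ℝ) : Prop :=
  (∀ r, 0 ≤ f r) ∧ Monotone f ∧ Filter.Tendsto f Filter.atTop Filter.atTop

/-- The fiber distance over `a`: the induced path metric on the fiber `p⁻¹(a)`. -/
noncomputable def fibDist {X B : Type*} [MetricSpace X] (p : X → B) (a : B) (x y : X) : ℝ :=
  (inducedPathDist (p ⁻¹' {a}) x y).toReal

/-!
Subdivide the base geodesic at the integer times and at its endpoint, and call a subdivision
point good when the fiber distance of the two lifts there is at most `D = max C M`. The endpoints
are good, and a bad point lies in a maximal run of bad points flanked by two good ones. Along the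
run the fiber distances exceed `M`, so flaring bounds its length by `τ D`. The bad point is thus
within `τ D` of a good point, where the lifts are `D`-close in `𝔛`; the quasi-isometry bounds keep
them `D + 2 (k τ D + k)`-close at the bad point, and the proper embedding of the fiber converts
this into a bound on the fiber distance.
-/

theorem add_mem_Icc_zero {c ℓ L u : ℝ} (hc : 0 ≤ c) (hcℓ : c + ℓ ≤ L) (hu : u ∈ Icc 0 ℓ) :
    c + u ∈ Icc 0 L :=
  ⟨by linarith [hu.1], by linarith [hu.2]⟩

section

variable {X B : Type*}

def IsLiftOn (p : X → B) (γ : ℝ → B) (S : Set ℝ) (γ' : ℝ → X) : Prop :=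
  ∀ t ∈ S, p (γ' t) = γ t

theorem IsLiftOn.shift {p : X → B} {γ : ℝ → B} {γ' : ℝ → X} {c ℓ L : ℝ}
    (h : IsLiftOn p γ (Icc 0 L) γ') (hc : 0 ≤ c) (hcℓ : c + ℓ ≤ L) :
    IsLiftOn p (fun u => γ (c + u)) (Icc 0 ℓ) (fun u => γ' (c + u)) :=
  fun _ hu => h _ (add_mem_Icc_zero hc hcℓ hu)

variable [MetricSpace X]

theorem edist_le_inducedPathDist (Z : Set X) (x y : X) :
    edist x y ≤ inducedPathDist Z x y := by
  refine le_iInf fun γ => le_iInf fun _ => le_iInf fun _ => le_iInf fun h0 => le_iInf fun h1 => ?_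
  rw [← h0, ← h1]
  exact eVariationOn.edist_le γ (left_mem_Icc.2 zero_le_one) (right_mem_Icc.2 zero_le_one)

theorem dist_le_fibDist (p : X → B) (a : B) {x y : X}
    (hfin : inducedPathDist (p ⁻¹' {a}) x y ≠ ⊤) : dist x y ≤ fibDist p a x y := by
  rw [dist_edist, fibDist]
  exact ENNReal.toReal_mono hfin (edist_le_inducedPathDist _ x y)

def IsQIEmbeddingOn (k : ℝ) (g : ℝ → X) (S : Set ℝ) : Prop :=
  ∀ s ∈ S, ∀ t ∈ S, |s - t| / k - k ≤ dist (g s) (g t) ∧ dist (g s) (g t) ≤ k * |s - t| + k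

theorem IsQIEmbeddingOn.shift {k c ℓ L : ℝ} {g : ℝ → X} (h : IsQIEmbeddingOn k g (Icc 0 L))
    (hc : 0 ≤ c) (hcℓ : c + ℓ ≤ L) : IsQIEmbeddingOn k (fun u => g (c + u)) (Icc 0 ℓ) := by
  intro s hs t ht
  simpa only [add_sub_add_left_eq_sub] using
    h _ (add_mem_Icc_zero hc hcℓ hs) _ (add_mem_Icc_zero hc hcℓ ht)

theorem IsQIEmbeddingOn.dist_le {k : ℝ} {g₁ g₂ : ℝ → X} {S : Set ℝ}
    (h₁ : IsQIEmbeddingOn k g₁ S) (h₂ : IsQIEmbeddingOn k g₂ S) {s t : ℝ} (hs : s ∈ S)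
    (ht : t ∈ S) : dist (g₁ t) (g₂ t) ≤ dist (g₁ s) (g₂ s) + 2 * (k * |t - s| + k) := by
  have h₁t := (h₁ t ht s hs).2
  have h₂t := (h₂ t ht s hs).2
  have := dist_triangle4 (g₁ t) (g₁ s) (g₂ s) (g₂ t)
  rw [dist_comm (g₂ s)] at this
  linarith

theorem IsGeodesicFrom.dist_eq_sub {γ : ℝ → X} {a b : X} (hγ : IsGeodesicFrom γ a b) {s t : ℝ}
    (hs : 0 ≤ s) (hst : s ≤ t) (ht : t ≤ dist a b) : dist (γ s) (γ t) = t - s := by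
  rw [hγ.2.2 s ⟨hs, hst.trans ht⟩ t ⟨hs.trans hst, ht⟩, abs_sub_comm, abs_of_nonneg (by linarith)]

theorem IsGeodesicFrom.shift {γ : ℝ → X} {a b : X} (hγ : IsGeodesicFrom γ a b) {s t : ℝ}
    (hs : 0 ≤ s) (hst : s ≤ t) (ht : t ≤ dist a b) :
    IsGeodesicFrom (fun u => γ (s + u)) (γ s) (γ t) := by
  have hd := hγ.dist_eq_sub hs hst ht
  have hsub : s + (t - s) ≤ dist a b := by linarith
  refine ⟨by simp, by simp [hd], fun u hu v hv => ?_⟩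
  rw [hd] at hu hv
  rw [hγ.2.2 _ (add_mem_Icc_zero hs hsub hu) _ (add_mem_Icc_zero hs hsub hv),
    add_sub_add_left_eq_sub]

def UniformFlaring [MetricSpace B] (p : X → B) (k M : ℝ) (τ : ℝ → ℝ) : Prop :=
  ∀ D : ℝ, 0 ≤ D → ∀ (a b : B) (γ : ℝ → B) (γ₀ γ₁ : ℝ → X),
    IsGeodesicFrom γ a b →
    IsLiftOn p γ (Icc 0 (dist a b)) γ₀ → IsLiftOn p γ (Icc 0 (dist a b)) γ₁ →
    IsQIEmbeddingOn k γ₀ (Icc 0 (dist a b)) → IsQIEmbeddingOn k γ₁ (Icc 0 (dist a b)) →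
    ∀ (n : ℕ) (ts : ℕ → ℝ), ts 0 = 0 → ts n = dist a b →
      (∀ i < n, ts i < ts (i + 1) ∧ ts (i + 1) - ts i ≤ 1) →
      (∀ i, 0 < i → i < n → M < fibDist p (γ (ts i)) (γ₀ (ts i)) (γ₁ (ts i))) →
      fibDist p a (γ₀ 0) (γ₁ 0) ≤ D → fibDist p b (γ₀ (dist a b)) (γ₁ (dist a b)) ≤ D →
      dist a b ≤ τ D

def unitSubdivision (L : ℝ) (i : ℕ) : ℝ := min (i : ℝ) L

section unitSubdivision

variable {L : ℝ}

theorem unitSubdivision_zero (hL : 0 ≤ L) : unitSubdivision L 0 = 0 := by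
  simp [unitSubdivision, hL]

theorem unitSubdivision_ceil : unitSubdivision L ⌈L⌉₊ = L :=
  min_eq_right (Nat.le_ceil L)

theorem unitSubdivision_of_le {n : ℕ} (hn : (n : ℝ) ≤ L) : unitSubdivision L n = n :=
  min_eq_left hn

theorem unitSubdivision_mem_Icc (hL : 0 ≤ L) (i : ℕ) : unitSubdivision L i ∈ Icc 0 L :=
  ⟨le_min i.cast_nonneg hL, min_le_right _ _⟩

theorem unitSubdivision_monotone : Monotone (unitSubdivision L) :=
  fun _ _ h => min_le_min_right L (Nat.cast_le.2 h)

theorem unitSubdivision_step {i : ℕ} (hi : i < ⌈L⌉₊) :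
    unitSubdivision L i < unitSubdivision L (i + 1) ∧
      unitSubdivision L (i + 1) - unitSubdivision L i ≤ 1 := by
  have hiL : (i : ℝ) < L := Nat.lt_ceil.1 hi
  simp only [unitSubdivision, Nat.cast_add_one, min_eq_left hiL.le]
  exact ⟨lt_min (lt_add_one _) hiL, by linarith [min_le_left ((i : ℝ) + 1) L]⟩

end unitSubdivision

theorem Nat.exists_gap_around {Q : ℕ → Prop} {N j : ℕ} (h0 : Q 0) (hN : Q N) (hjN : j ≤ N)
    (hj : ¬ Q j) : ∃ i₀ i₁, i₀ < j ∧ j < i₁ ∧ i₁ ≤ N ∧ Q i₀ ∧ Q i₁ ∧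
      ∀ i, i₀ < i → i < i₁ → ¬ Q i := by
  classical
  have hex : ∃ m, j ≤ m ∧ Q m := ⟨N, hjN, hN⟩
  have hi₀ : Q (Nat.findGreatest Q j) := Nat.findGreatest_spec (Nat.zero_le j) h0
  have hi₁ := Nat.find_spec hex
  refine ⟨Nat.findGreatest Q j, Nat.find hex, ?_, ?_, Nat.find_min' hex ⟨hjN, hN⟩, hi₀, hi₁.2,
    fun i hi₀i hii₁ => ?_⟩
  · exact (Nat.findGreatest_le j).lt_of_ne fun h => hj (h ▸ hi₀)
  · exact hi₁.1.lt_of_ne fun h => hj (h ▸ hi₁.2)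
  · rcases le_or_gt i j with hij | hji
    · exact Nat.findGreatest_is_greatest hi₀i hij
    · exact fun hQ => Nat.find_min hex hii₁ ⟨hji.le, hQ⟩

section Flaring

variable [MetricSpace B] {p : X → B} {k M D : ℝ} {τ : ℝ → ℝ} {a b : B} {γ : ℝ → B}
  {γ₁ γ₂ : ℝ → X}

theorem UniformFlaring.unitSubdivision_sub_le (hfl : UniformFlaring p k M τ) (hD : 0 ≤ D)
    (hγ : IsGeodesicFrom γ a b) (hl₁ : IsLiftOn p γ (Icc 0 (dist a b)) γ₁)
    (hl₂ : IsLiftOn p γ (Icc 0 (dist a b)) γ₂) (hq₁ : IsQIEmbeddingOn k γ₁ (Icc 0 (dist a b)))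
    (hq₂ : IsQIEmbeddingOn k γ₂ (Icc 0 (dist a b))) {i₀ i₁ : ℕ} (hi : i₀ ≤ i₁)
    (hi₁ : i₁ ≤ ⌈dist a b⌉₊)
    (hgood₀ : fibDist p (γ (unitSubdivision (dist a b) i₀))
      (γ₁ (unitSubdivision (dist a b) i₀)) (γ₂ (unitSubdivision (dist a b) i₀)) ≤ D)
    (hgood₁ : fibDist p (γ (unitSubdivision (dist a b) i₁))
      (γ₁ (unitSubdivision (dist a b) i₁)) (γ₂ (unitSubdivision (dist a b) i₁)) ≤ D)
    (hflared : ∀ i, i₀ < i → i < i₁ → M < fibDist p (γ (unitSubdivision (dist a b) i))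
      (γ₁ (unitSubdivision (dist a b) i)) (γ₂ (unitSubdivision (dist a b) i))) :
    unitSubdivision (dist a b) i₁ - unitSubdivision (dist a b) i₀ ≤ τ D := by
  have hL : 0 ≤ dist a b := dist_nonneg
  set s := unitSubdivision (dist a b)
  have hs₀ : 0 ≤ s i₀ := (unitSubdivision_mem_Icc hL i₀).1
  have hs₁ : s i₁ ≤ dist a b := (unitSubdivision_mem_Icc hL i₁).2
  have hle : s i₀ ≤ s i₁ := unitSubdivision_monotone hi
  have hend : s i₀ + (s i₁ - s i₀) ≤ dist a b := by linarith
  have hd := hγ.dist_eq_sub hs₀ hle hs₁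
  have hshift : ∀ i, s i₀ + (s (i₀ + i) - s i₀) = s (i₀ + i) := fun i => by ring
  rw [← hd]
  refine hfl D hD _ _ _ (fun u => γ₁ (s i₀ + u)) (fun u => γ₂ (s i₀ + u)) (hγ.shift hs₀ hle hs₁)
    ?_ ?_ ?_ ?_ (i₁ - i₀) (fun i => s (i₀ + i) - s i₀) (by simp) ?_ (fun i hi' => ?_)
    (fun i h0 hi' => ?_) ?_ ?_
  · exact hd ▸ hl₁.shift hs₀ hend
  · exact hd ▸ hl₂.shift hs₀ hend
  · exact hd ▸ hq₁.shift hs₀ hend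
  · exact hd ▸ hq₂.shift hs₀ hend
  · rw [Nat.add_sub_cancel' hi, hd]
  · have := unitSubdivision_step (L := dist a b) (i := i₀ + i) (by omega)
    rw [← add_assoc]
    constructor <;> linarith
  · simpa only [hshift] using hflared _ (by omega) (by omega)
  · simpa only [add_zero] using hgood₀
  · rwa [hd, add_sub_cancel]

theorem UniformFlaring.fibDist_unitSubdivision_le {f : ℝ → ℝ} (hfl : UniformFlaring p k M τ)
    (hk : 0 ≤ k) (hD : 0 ≤ D) (hMD : M ≤ D)
    (hfin : ∀ (a : B) (x y : X), p x = a → p y = a → inducedPathDist (p ⁻¹' {a}) x y ≠ ⊤)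
    (hproper : ∀ (a : B) (x y : X), p x = a → p y = a →
      ∀ s : ℝ, dist x y ≤ s → fibDist p a x y ≤ f s)
    (hγ : IsGeodesicFrom γ a b) (hl₁ : IsLiftOn p γ (Icc 0 (dist a b)) γ₁)
    (hl₂ : IsLiftOn p γ (Icc 0 (dist a b)) γ₂) (hq₁ : IsQIEmbeddingOn k γ₁ (Icc 0 (dist a b)))
    (hq₂ : IsQIEmbeddingOn k γ₂ (Icc 0 (dist a b))) (h₀ : fibDist p a (γ₁ 0) (γ₂ 0) ≤ D)
    (h₁ : fibDist p b (γ₁ (dist a b)) (γ₂ (dist a b)) ≤ D) {j : ℕ} (hj : j ≤ ⌈dist a b⌉₊) :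
    fibDist p (γ (unitSubdivision (dist a b) j)) (γ₁ (unitSubdivision (dist a b) j))
      (γ₂ (unitSubdivision (dist a b) j)) ≤ max D (f (D + 2 * (k * τ D + k))) := by
  have hL : 0 ≤ dist a b := dist_nonneg
  set s := unitSubdivision (dist a b)
  have hmem := unitSubdivision_mem_Icc hL
  have hs₀ : s 0 = 0 := unitSubdivision_zero hL
  have hsN : s ⌈dist a b⌉₊ = dist a b := unitSubdivision_ceil
  by_cases hgood : fibDist p (γ (s j)) (γ₁ (s j)) (γ₂ (s j)) ≤ D
  · exact le_max_of_le_left hgood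
  obtain ⟨i₀, i₁, hi₀j, hji₁, hi₁N, hgood₀, hgood₁, hflared⟩ :=
    Nat.exists_gap_around (Q := fun i => fibDist p (γ (s i)) (γ₁ (s i)) (γ₂ (s i)) ≤ D)
      (by rwa [hs₀, hγ.1]) (by rwa [hsN, hγ.2.1]) hj hgood
  have hτ := hfl.unitSubdivision_sub_le hD hγ hl₁ hl₂ hq₁ hq₂ (hi₀j.trans hji₁).le hi₁N hgood₀
    hgood₁ fun i h h' => hMD.trans_lt (not_le.1 (hflared i h h'))
  have hji₀ : |s j - s i₀| ≤ τ D := by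
    rw [abs_of_nonneg (sub_nonneg.2 (unitSubdivision_monotone hi₀j.le))]
    linarith [unitSubdivision_monotone (L := dist a b) hji₁.le]
  have hdist : dist (γ₁ (s j)) (γ₂ (s j)) ≤ D + 2 * (k * τ D + k) := calc
    _ ≤ dist (γ₁ (s i₀)) (γ₂ (s i₀)) + 2 * (k * |s j - s i₀| + k) :=
      hq₁.dist_le hq₂ (hmem i₀) (hmem j)
    _ ≤ D + 2 * (k * τ D + k) := by
      gcongr
      exact (dist_le_fibDist p _ (hfin _ _ _ (hl₁ _ (hmem i₀)) (hl₂ _ (hmem i₀)))).trans hgood₀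
  exact le_max_of_le_right (hproper _ _ _ (hl₁ _ (hmem j)) (hl₂ _ (hmem j)) _ hdist)

end Flaring

end

theorem middle_is_also_small_general (f : ℝ → ℝ)
    {XX BB : Type*} [MetricSpace XX] [MetricSpace BB]
    (p : XX → BB)
    (hfib_fin : ∀ (a : BB) (x y : XX), p x = a → p y = a →
      inducedPathDist (p ⁻¹' {a}) x y ≠ ⊤)
    (hfib_proper : ∀ (a : BB) (x y : XX), p x = a → p y = a →
      ∀ s : ℝ, dist x y ≤ s → fibDist p a x y ≤ f s)
    (k : ℝ) (hk : 1 ≤ k) (M : ℝ) (τ : ℝ → ℝ)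
    (hflare : ∀ D : ℝ, 0 ≤ D →
      ∀ (a b : BB) (γ : ℝ → BB) (γ₀ γ₁ : ℝ → XX),
        IsGeodesicFrom γ a b →
        (∀ t ∈ Set.Icc (0 : ℝ) (dist a b), p (γ₀ t) = γ t) →
        (∀ t ∈ Set.Icc (0 : ℝ) (dist a b), p (γ₁ t) = γ t) →
        (∀ s ∈ Set.Icc (0 : ℝ) (dist a b), ∀ t ∈ Set.Icc (0 : ℝ) (dist a b),
          |s - t| / k - k ≤ dist (γ₀ s) (γ₀ t) ∧ dist (γ₀ s) (γ₀ t) ≤ k * |s - t| + k) →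
        (∀ s ∈ Set.Icc (0 : ℝ) (dist a b), ∀ t ∈ Set.Icc (0 : ℝ) (dist a b),
          |s - t| / k - k ≤ dist (γ₁ s) (γ₁ t) ∧ dist (γ₁ s) (γ₁ t) ≤ k * |s - t| + k) →
        ∀ (n : ℕ) (ts : ℕ → ℝ),
          ts 0 = 0 → ts n = dist a b →
          (∀ i < n, ts i < ts (i + 1) ∧ ts (i + 1) - ts i ≤ 1) →
          (∀ i, 0 < i → i < n →
            M < fibDist p (γ (ts i)) (γ₀ (ts i)) (γ₁ (ts i))) →
          fibDist p a (γ₀ 0) (γ₁ 0) ≤ D →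
          fibDist p b (γ₀ (dist a b)) (γ₁ (dist a b)) ≤ D →
          dist a b ≤ τ D)
    (C : ℝ) (hC : 0 ≤ C) :
    ∃ R : ℝ, C < R ∧
      ∀ (a b : BB) (γ : ℝ → BB) (γ₁ γ₂ : ℝ → XX),
        IsGeodesicFrom γ a b →
        (∀ t ∈ Set.Icc (0 : ℝ) (dist a b), p (γ₁ t) = γ t) →
        (∀ t ∈ Set.Icc (0 : ℝ) (dist a b), p (γ₂ t) = γ t) →
        (∀ s ∈ Set.Icc (0 : ℝ) (dist a b), ∀ t ∈ Set.Icc (0 : ℝ) (dist a b),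
          |s - t| / k - k ≤ dist (γ₁ s) (γ₁ t) ∧ dist (γ₁ s) (γ₁ t) ≤ k * |s - t| + k) →
        (∀ s ∈ Set.Icc (0 : ℝ) (dist a b), ∀ t ∈ Set.Icc (0 : ℝ) (dist a b),
          |s - t| / k - k ≤ dist (γ₂ s) (γ₂ t) ∧ dist (γ₂ s) (γ₂ t) ≤ k * |s - t| + k) →
        fibDist p a (γ₁ 0) (γ₂ 0) ≤ C →
        fibDist p b (γ₁ (dist a b)) (γ₂ (dist a b)) ≤ C →
        (∀ n : ℕ, (n : ℝ) ≤ dist a b →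
            fibDist p (γ (n : ℝ)) (γ₁ (n : ℝ)) (γ₂ (n : ℝ)) ≤ R) ∧
          fibDist p b (γ₁ (dist a b)) (γ₂ (dist a b)) ≤ R := by
  have hfl : UniformFlaring p k M τ := hflare
  set D := max C M
  refine ⟨max D (f (D + 2 * (k * τ D + k))) + 1,
    (le_max_left C M).trans_lt (lt_add_of_le_of_pos (le_max_left _ _) one_pos), ?_⟩
  intro a b γ γ₁ γ₂ hγ hl₁ hl₂ hq₁ hq₂ h₀ h₁
  have hbound : ∀ j ≤ ⌈dist a b⌉₊, fibDist p (γ (unitSubdivision (dist a b) j))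
      (γ₁ (unitSubdivision (dist a b) j)) (γ₂ (unitSubdivision (dist a b) j))
        ≤ max D (f (D + 2 * (k * τ D + k))) + 1 := fun j hj =>
    le_add_of_le_of_nonneg (hfl.fibDist_unitSubdivision_le (by linarith) (le_max_of_le_left hC)
      (le_max_right C M) hfib_fin hfib_proper hγ hl₁ hl₂ hq₁ hq₂ (h₀.trans (le_max_left C M))
      (h₁.trans (le_max_left C M)) hj) zero_le_one
  refine ⟨fun n hn => ?_, ?_⟩
  · simpa only [unitSubdivision_of_le hn] using
      hbound n (Nat.cast_le.1 (hn.trans (Nat.le_ceil _)))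
  · simpa only [unitSubdivision_ceil, hγ.2.1] using hbound _ le_rfl

/-- If `p : 𝔛 → 𝔅` (surjective, 1-Lipschitz, with geodesic
`f`-properly embedded fibers) satisfies uniform `k`-flaring with threshold `M` and
flaring time `τ`, then for every `C ≥ 0` there is `R > C` such that any pair of
`k`-qi lifts of a geodesic whose endpoint fiber distances are at most `C` has all
fiber distances at integer times (and at the final time) bounded by `R`. -/
theorem middle_is_also_small (f : ℝ → ℝ) (hf : ProperFun f)
    {XX BB : Type*} [MetricSpace XX] [MetricSpace BB]
    (hXgeo : GeodesicMetricSpace XX) (hBgeo : GeodesicMetricSpace BB)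
    (p : XX → BB) (hsurj : Function.Surjective p) (hlip : LipschitzWith 1 p)
    (hfib_fin : ∀ (a : BB) (x y : XX), p x = a → p y = a →
      inducedPathDist (p ⁻¹' {a}) x y ≠ ⊤)
    (hfib_geo : ∀ (a : BB) (x y : XX), p x = a → p y = a →
      ∃ γ : ℝ → XX,
        (∀ t ∈ Set.Icc (0 : ℝ) (fibDist p a x y), p (γ t) = a) ∧
        γ 0 = x ∧ γ (fibDist p a x y) = y ∧
        ∀ s ∈ Set.Icc (0 : ℝ) (fibDist p a x y), ∀ t ∈ Set.Icc (0 : ℝ) (fibDist p a x y),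
          fibDist p a (γ s) (γ t) = |s - t|)
    (hfib_proper : ∀ (a : BB) (x y : XX), p x = a → p y = a →
      ∀ s : ℝ, dist x y ≤ s → fibDist p a x y ≤ f s)
    (k : ℝ) (hk : 1 ≤ k) (M : ℝ) (hM : 0 < M) (τ : ℝ → ℝ)
    (hflare : ∀ D : ℝ, 0 ≤ D →
      ∀ (a b : BB) (γ : ℝ → BB) (γ₀ γ₁ : ℝ → XX),
        IsGeodesicFrom γ a b →
        (∀ t ∈ Set.Icc (0 : ℝ) (dist a b), p (γ₀ t) = γ t) →
        (∀ t ∈ Set.Icc (0 : ℝ) (dist a b), p (γ₁ t) = γ t) →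
        (∀ s ∈ Set.Icc (0 : ℝ) (dist a b), ∀ t ∈ Set.Icc (0 : ℝ) (dist a b),
          |s - t| / k - k ≤ dist (γ₀ s) (γ₀ t) ∧ dist (γ₀ s) (γ₀ t) ≤ k * |s - t| + k) →
        (∀ s ∈ Set.Icc (0 : ℝ) (dist a b), ∀ t ∈ Set.Icc (0 : ℝ) (dist a b),
          |s - t| / k - k ≤ dist (γ₁ s) (γ₁ t) ∧ dist (γ₁ s) (γ₁ t) ≤ k * |s - t| + k) →
        ∀ (n : ℕ) (ts : ℕ → ℝ),
          ts 0 = 0 → ts n = dist a b →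
          (∀ i < n, ts i < ts (i + 1) ∧ ts (i + 1) - ts i ≤ 1) →
          (∀ i, 0 < i → i < n →
            M < fibDist p (γ (ts i)) (γ₀ (ts i)) (γ₁ (ts i))) →
          fibDist p a (γ₀ 0) (γ₁ 0) ≤ D →
          fibDist p b (γ₀ (dist a b)) (γ₁ (dist a b)) ≤ D →
          dist a b ≤ τ D)
    (C : ℝ) (hC : 0 ≤ C) :
    ∃ R : ℝ, C < R ∧
      ∀ (a b : BB) (γ : ℝ → BB) (γ₁ γ₂ : ℝ → XX),
        IsGeodesicFrom γ a b →
        (∀ t ∈ Set.Icc (0 : ℝ) (dist a b), p (γ₁ t) = γ t) →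
        (∀ t ∈ Set.Icc (0 : ℝ) (dist a b), p (γ₂ t) = γ t) →
        (∀ s ∈ Set.Icc (0 : ℝ) (dist a b), ∀ t ∈ Set.Icc (0 : ℝ) (dist a b),
          |s - t| / k - k ≤ dist (γ₁ s) (γ₁ t) ∧ dist (γ₁ s) (γ₁ t) ≤ k * |s - t| + k) →
        (∀ s ∈ Set.Icc (0 : ℝ) (dist a b), ∀ t ∈ Set.Icc (0 : ℝ) (dist a b),
          |s - t| / k - k ≤ dist (γ₂ s) (γ₂ t) ∧ dist (γ₂ s) (γ₂ t) ≤ k * |s - t| + k) →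
        fibDist p a (γ₁ 0) (γ₂ 0) ≤ C →
        fibDist p b (γ₁ (dist a b)) (γ₂ (dist a b)) ≤ C →
        (∀ n : ℕ, (n : ℝ) ≤ dist a b →
            fibDist p (γ (n : ℝ)) (γ₁ (n : ℝ)) (γ₂ (n : ℝ)) ≤ R) ∧
          fibDist p b (γ₁ (dist a b)) (γ₂ (dist a b)) ≤ R :=
  middle_is_also_small_general f p hfib_fin hfib_proper k hk M τ hflare C hC
end
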